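/- arXiv:1307.7407 — 3 statements merged into one kernel-verified Lean document; each statement's English description precedes it below -/
import Mathlib

section
/- Lebesgue measure m on [0,1] is invariant under f: for every x ∈ [0,1], m(f^{−1}([0,x])) = x; equivalently, m(f^{−1}(A)) = m(A) for every Borel set A ⊆ [0,1]. -/
open MeasureTheory Set Filter Topology
open scoped Classical ENNReal

structure GBTSetup where
  α : ℝ
  α' : ℝ
  c₀ : ℝ
  c₁ : ℝ
  g₀ : ℝ → ℝ
  g₁ : ℝ → ℝ
  φ : ℝ → ℝ
  a : ℝ
  f : ℝ → ℝ
  hα : 0 < α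
  hα'_pos : 0 < α'
  hα'_le : α' ≤ α
  hc₀ : 0 < c₀
  hc₁ : 0 < c₁
  hφ_cont : ContinuousOn φ (Icc 0 1)
  hφ_anti : AntitoneOn φ (Icc 0 1)
  hφ_mem : ∀ t ∈ Icc (0:ℝ) 1, φ t ∈ Icc (0:ℝ) 1
  hg₀_diff : ContDiffOn ℝ 1 g₀ (Ioo 0 1)
  hg₀_o : (fun t => deriv g₀ t) =o[nhdsWithin 0 (Ioi 0)] fun t : ℝ => t ^ (α - 1)
  hφ_near0 : ∀ᶠ t in nhdsWithin (0:ℝ) (Ioi 0), φ t = 1 - c₀ * t ^ α + g₀ t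
  hφ_one : φ 1 = 0
  hg₁_diff : ContDiffOn ℝ 1 g₁ (Ioo 0 1)
  hg₁_o : (fun t => deriv g₁ t) =o[nhdsWithin 0 (Ioi 0)] fun t : ℝ => t ^ (α' - 1)
  hφ_near1 : ∀ᶠ t in nhdsWithin (1:ℝ) (Iio 1), φ t = c₁ * (1 - t) ^ α' + g₁ (1 - t)
  ha_def : a = ∫ t in (0:ℝ)..1, φ t
  ha_mem : a ∈ Ioo (0:ℝ) 1
  hf_left : ∀ x ∈ Icc 0 a, x = ∫ t in (0:ℝ)..(f x), φ t
  hf_right : ∀ x ∈ Ioc a 1, 1 - x = ∫ t in (f x)..1, (1 - φ t)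
  hf_mono_left : StrictMonoOn f (Icc 0 a)
  hf_mono_right : StrictMonoOn f (Ioc a 1)
  hf_onto_left : f '' Icc 0 a = Icc 0 1
  hf_onto_right : f '' Ioc a 1 = Ioc 0 1

noncomputable def distTrunc (S : Set ℝ) (δ : ℝ) (x : ℝ) : ℝ :=
  if Metric.infDist x S ≤ δ then Metric.infDist x S else 1

def IsHypTime (f : ℝ → ℝ) (S : Set ℝ) (b σ δ : ℝ) (x : ℝ) (n : ℕ) : Prop :=
  1 ≤ n ∧ ∀ l : ℕ, 1 ≤ l → l ≤ n →
    (∏ j ∈ Finset.Ico (n - l) n, |deriv f (f^[j] x)|⁻¹) ≤ σ ^ l ∧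
    σ ^ (b * (l : ℝ)) ≤ distTrunc S δ (f^[n - l] x)

noncomputable def firstHypTime (f : ℝ → ℝ) (S : Set ℝ) (b σ δ : ℝ) (x : ℝ) : ℕ∞ :=
  sInf ((fun n : ℕ => (n : ℕ∞)) '' {n : ℕ | IsHypTime f S b σ δ x n})

noncomputable def HFun (f : ℝ → ℝ) (NN : ℝ → ℝ) (z : ℝ) : ℕ∞ :=
  sInf ((fun n : ℕ => (n : ℕ∞)) '' {n : ℕ | (∑ k ∈ Finset.range (n+1), NN (f^[k] z)) < 0})

noncomputable def Nfun (x₁ x₀ y₀ y₁ xk yk : ℝ) (z : ℝ) : ℝ :=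
  if z ∈ Set.Ioo x₁ x₀ ∪ Set.Ioo y₀ y₁ then -1
  else if z ∈ Set.Ico (0:ℝ) xk ∪ Set.Ioc yk 1 then 1 else 0


/-!
The map `f` has two inverse branches, `x ↦ ∫₀ˣ φ` from `[0,1]` onto `[0,a]` and
`x ↦ 1 - ∫ₓ¹ (1 - φ)` from `(0,1]` onto `(a,1]`, with derivatives `φ` and `1 - φ`. Hence
`f⁻¹ A` is the disjoint union of the images of `A` under the two branches, and by the change of
variables formula its measure is `∫_A φ + ∫_A (1 - φ) = m A`.
-/

lemma volume_image_eq_setLIntegral_ofReal_deriv {s : Set ℝ} {F F' : ℝ → ℝ}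
    (hs : MeasurableSet s) (hF : ∀ x ∈ s, HasDerivWithinAt F (F' x) s x)
    (hF' : ∀ x ∈ s, 0 ≤ F' x) (hinj : InjOn F s) :
    volume (F '' s) = ∫⁻ x in s, ENNReal.ofReal (F' x) := by
  rw [← setLIntegral_one, lintegral_image_eq_lintegral_abs_deriv_mul hs hF hinj]
  refine setLIntegral_congr_fun hs fun x hx => ?_
  rw [abs_of_nonneg (hF' x hx), mul_one]

lemma setLIntegral_ofReal_add_setLIntegral_ofReal_one_sub {X : Type*} [MeasurableSpace X]
    {μ : Measure X} {g : X → ℝ} (hg : Measurable g) (hg01 : ∀ x, g x ∈ Icc (0:ℝ) 1)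
    (s : Set X) :
    ∫⁻ x in s, ENNReal.ofReal (g x) ∂μ + ∫⁻ x in s, ENNReal.ofReal (1 - g x) ∂μ = μ s := by
  rw [← lintegral_add_left hg.ennreal_ofReal, ← setLIntegral_one]
  refine lintegral_congr fun x => ?_
  rw [← ENNReal.ofReal_add (hg01 x).1 (sub_nonneg.2 (hg01 x).2), add_sub_cancel,
    ENNReal.ofReal_one]

namespace GBTSetup

variable (S : GBTSetup)

/-- `φ` extended to `ℝ` by constants, so that the inverse branches are differentiable everywhere. -/
noncomputable def φext (t : ℝ) : ℝ := S.φ (projIcc 0 1 zero_le_one t)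

lemma φext_eqOn : EqOn S.φext S.φ (Icc 0 1) := fun t ht => by
  rw [φext, projIcc_of_mem _ ht]

lemma continuous_φext : Continuous S.φext :=
  S.hφ_cont.comp_continuous (continuous_subtype_val.comp continuous_projIcc) fun t =>
    (projIcc 0 1 zero_le_one t).2

lemma φext_mem (t : ℝ) : S.φext t ∈ Icc (0:ℝ) 1 :=
  S.hφ_mem _ (projIcc 0 1 zero_le_one t).2

noncomputable def leftBranch (x : ℝ) : ℝ := ∫ t in (0:ℝ)..x, S.φext t

noncomputable def rightBranch (x : ℝ) : ℝ := 1 - ∫ t in x..1, (1 - S.φext t)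

lemma hasDerivAt_leftBranch (x : ℝ) : HasDerivAt S.leftBranch (S.φext x) x :=
  (S.continuous_φext.integral_hasStrictDerivAt 0 x).hasDerivAt

lemma hasDerivAt_rightBranch (x : ℝ) : HasDerivAt S.rightBranch (1 - S.φext x) x := by
  have hg : Continuous fun t => 1 - S.φext t := continuous_const.sub S.continuous_φext
  have h := (intervalIntegral.integral_hasDerivAt_left (hg.intervalIntegrable x 1)
    (hg.stronglyMeasurableAtFilter _ _) hg.continuousAt).const_sub 1
  rwa [neg_neg] at h

lemma leftInvOn_leftBranch : LeftInvOn S.leftBranch S.f (Icc 0 S.a) := fun y hy => by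
  have hfy : S.f y ∈ Icc (0:ℝ) 1 := S.hf_onto_left ▸ mem_image_of_mem S.f hy
  exact (intervalIntegral.integral_congr
    (S.φext_eqOn.mono (uIcc_subset_Icc (left_mem_Icc.2 zero_le_one) hfy))).trans
    (S.hf_left y hy).symm

lemma leftInvOn_rightBranch : LeftInvOn S.rightBranch S.f (Ioc S.a 1) := fun y hy => by
  have hfy : S.f y ∈ Icc (0:ℝ) 1 := Ioc_subset_Icc_self (S.hf_onto_right ▸ mem_image_of_mem S.f hy)
  have hint : ∫ t in (S.f y)..1, (1 - S.φext t) = ∫ t in (S.f y)..1, (1 - S.φ t) :=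
    intervalIntegral.integral_congr fun t ht => by
      rw [S.φext_eqOn (uIcc_subset_Icc hfy (right_mem_Icc.2 zero_le_one) ht)]
  rw [rightBranch, hint, ← S.hf_right y hy, sub_sub_cancel]

lemma rightInvOn_leftBranch : RightInvOn S.leftBranch S.f (Icc 0 1) :=
  S.hf_onto_left ▸ S.leftInvOn_leftBranch.rightInvOn_image

lemma rightInvOn_rightBranch : RightInvOn S.rightBranch S.f (Ioc 0 1) :=
  S.hf_onto_right ▸ S.leftInvOn_rightBranch.rightInvOn_image

lemma image_leftBranch : S.leftBranch '' Icc 0 1 = Icc 0 S.a :=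
  S.hf_onto_left ▸ S.leftInvOn_leftBranch.image_image

lemma image_rightBranch : S.rightBranch '' Ioc 0 1 = Ioc S.a 1 :=
  S.hf_onto_right ▸ S.leftInvOn_rightBranch.image_image

lemma Icc_inter_preimage_f (A : Set ℝ) :
    Icc 0 1 ∩ S.f ⁻¹' A = S.leftBranch '' (A ∩ Icc 0 1) ∪ S.rightBranch '' (A ∩ Ioc 0 1) := by
  rw [S.rightInvOn_leftBranch.image_inter', S.rightInvOn_rightBranch.image_inter',
    image_leftBranch, image_rightBranch, ← inter_union_distrib_left,
    Icc_union_Ioc_eq_Icc S.ha_mem.1.le S.ha_mem.2.le, inter_comm]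

lemma volume_image_leftBranch {s : Set ℝ} (hs : MeasurableSet s) (hs01 : s ⊆ Icc 0 1) :
    volume (S.leftBranch '' s) = ∫⁻ x in s, ENNReal.ofReal (S.φext x) :=
  volume_image_eq_setLIntegral_ofReal_deriv hs
    (fun x _ => (S.hasDerivAt_leftBranch x).hasDerivWithinAt) (fun x _ => (S.φext_mem x).1)
    (S.rightInvOn_leftBranch.injOn.mono hs01)

lemma volume_image_rightBranch {s : Set ℝ} (hs : MeasurableSet s) (hs01 : s ⊆ Ioc 0 1) :
    volume (S.rightBranch '' s) = ∫⁻ x in s, ENNReal.ofReal (1 - S.φext x) :=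
  volume_image_eq_setLIntegral_ofReal_deriv hs
    (fun x _ => (S.hasDerivAt_rightBranch x).hasDerivWithinAt)
    (fun x _ => sub_nonneg.2 (S.φext_mem x).2) (S.rightInvOn_rightBranch.injOn.mono hs01)

lemma volume_Icc_inter_preimage_f {A : Set ℝ} (hA : A ⊆ Icc 0 1) (hAm : MeasurableSet A) :
    volume (Icc 0 1 ∩ S.f ⁻¹' A) = volume A := by
  have hdisj : Disjoint (S.leftBranch '' (A ∩ Icc 0 1)) (S.rightBranch '' (A ∩ Ioc 0 1)) := by
    refine (Iic_disjoint_Ioi (le_refl S.a)).mono ?_ ?_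
    · exact (image_mono inter_subset_right).trans (S.image_leftBranch ▸ Icc_subset_Iic_self)
    · exact (image_mono inter_subset_right).trans (S.image_rightBranch ▸ Ioc_subset_Ioi_self)
  have hAm' : MeasurableSet (A ∩ Ioc 0 1) := hAm.inter measurableSet_Ioc
  have hmeas : MeasurableSet (S.rightBranch '' (A ∩ Ioc 0 1)) :=
    hAm'.image_of_continuousOn_injOn
      (fun x _ => (S.hasDerivAt_rightBranch x).continuousAt.continuousWithinAt)
      (S.rightInvOn_rightBranch.injOn.mono inter_subset_right)
  have hae : (A ∩ Ioc 0 1 : Set ℝ) =ᵐ[volume] A := by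
    simpa only [inter_eq_left.2 hA] using
      (ae_eq_refl A).inter (Ioc_ae_eq_Icc (μ := volume) (a := (0:ℝ)) (b := 1))
  rw [S.Icc_inter_preimage_f, measure_union hdisj hmeas, inter_eq_left.2 hA,
    S.volume_image_leftBranch hAm hA, S.volume_image_rightBranch hAm' inter_subset_right,
    setLIntegral_congr hae,
    setLIntegral_ofReal_add_setLIntegral_ofReal_one_sub S.continuous_φext.measurable S.φext_mem]

end GBTSetup

theorem stmt1 (S : GBTSetup) :
    (∀ x ∈ Icc (0:ℝ) 1,
      volume (Icc (0:ℝ) 1 ∩ S.f ⁻¹' (Icc 0 x)) = ENNReal.ofReal x) ∧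
    ∀ A : Set ℝ, A ⊆ Icc (0:ℝ) 1 → MeasurableSet A →
      volume (Icc (0:ℝ) 1 ∩ S.f ⁻¹' A) = volume A := by
  refine ⟨fun x hx => ?_, fun A hA hAm => S.volume_Icc_inter_preimage_f hA hAm⟩
  rw [S.volume_Icc_inter_preimage_f (Icc_subset_Icc le_rfl hx.2) measurableSet_Icc,
    Real.volume_Icc, sub_zero]
end

section
/- f admits a period-2 orbit straddling a: there exist points x₀, y₀ with 0 < x₀ < a < y₀ < 1 such that f(x₀) = y₀ and f(y₀) = x₀. -/
open MeasureTheory Set Filter Topology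
open scoped Classical ENNReal

/-!
The inverses `L` of the left branch and `R` of the right branch of `f` are primitives, hence
continuous on `[0, 1]`, and `R ∘ L` maps `[a, 1]` into itself, so it has a fixed point `y`.
Then `x = L y` and `y` are swapped by `f`. Because `L` and `R` are injective (they are sections
of `f`), the endpoint values `L 0 = 0`, `L 1 = a`, `R 0 = a`, `R 1 = 1` rule out
`x ∈ {0, a}` and `y ∈ {a, 1}`.
-/

theorem exists_two_cycle_of_continuous_rightInvOn {α : Type*} [ConditionallyCompleteLinearOrder α]
    [DenselyOrdered α] [TopologicalSpace α] [OrderTopology α] {f L R : α → α} {p a q : α}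
    (hpa : p < a) (haq : a < q)
    (hLc : ContinuousOn L (Icc p q)) (hLm : MapsTo L (Icc p q) (Icc p a))
    (hLf : RightInvOn L f (Icc p q)) (hLp : L p = p) (hLq : L q = a)
    (hRc : ContinuousOn R (Icc p q)) (hRm : MapsTo R (Ioc p q) (Ioc a q))
    (hRf : RightInvOn R f (Ioc p q)) (hRp : R p = a) (hRq : R q = q) :
    ∃ x y, p < x ∧ x < a ∧ a < y ∧ y < q ∧ f x = y ∧ f y = x := by
  have hLinj : InjOn L (Icc p q) := LeftInvOn.injOn hLf
  have hRinj : InjOn R (Ioc p q) := LeftInvOn.injOn hRf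
  have hRm' : MapsTo R (Icc p a) (Icc a q) := by
    intro x hx
    rcases hx.1.eq_or_lt with rfl | hpx
    · rw [hRp]; exact ⟨le_rfl, haq.le⟩
    · exact Ioc_subset_Icc_self (hRm ⟨hpx, hx.2.trans haq.le⟩)
  have hsub : Icc a q ⊆ Icc p q := Icc_subset_Icc_left hpa.le
  obtain ⟨y, hy, hfix⟩ := exists_mem_Icc_isFixedPt_of_mapsTo
    (hRc.comp (hLc.mono hsub) ((hLm.mono_left hsub).mono_right (Icc_subset_Icc_right haq.le)))
    haq.le (hRm'.comp (hLm.mono_left hsub))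
  set x := L y with hx
  have hxIcc : x ∈ Icc p a := hLm (hsub hy)
  have hpx : p < x := by
    refine hxIcc.1.lt_of_ne fun hxp => hpa.ne' ?_
    have hya : y = a := by rw [← hfix, Function.comp_apply, ← hx, ← hxp, hRp]
    exact hLinj ⟨hpa.le, haq.le⟩ (left_mem_Icc.2 (hpa.trans haq).le)
      (by rw [← hya, hLp]; exact hxp.symm)
  have hxIoc : x ∈ Ioc p q := ⟨hpx, hxIcc.2.trans haq.le⟩
  have hay : a < y := hfix ▸ (hRm hxIoc).1
  have hxa : x < a := by
    refine hxIcc.2.lt_of_ne fun hxa => haq.ne ?_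
    have hyq : y = q := hLinj (hsub hy) (right_mem_Icc.2 (hpa.trans haq).le) (hxa.trans hLq.symm)
    exact hRinj ⟨hpa, haq.le⟩ ⟨hpa.trans haq, le_rfl⟩ (by rw [← hxa, hRq, ← hyq]; exact hfix)
  have hyq : y < q := hy.2.lt_of_ne fun hyq => hxa.ne (hx.trans (hyq ▸ hLq))
  exact ⟨x, y, hpx, hxa, hay, hyq, hLf (hsub hy), hfix ▸ hRf hxIoc⟩

namespace GBTSetup

variable (S : GBTSetup)

/-- Inverse of the left branch `f : [0, a] → [0, 1]`. -/
noncomputable def leftBranchInv (y : ℝ) : ℝ := ∫ t in (0:ℝ)..y, S.φ t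

/-- Inverse of the right branch `f : (a, 1] → (0, 1]`, extended continuously by `a` at `0`. -/
noncomputable def rightBranchInv (v : ℝ) : ℝ := 1 - ∫ t in v..1, (1 - S.φ t)

theorem leftInvOn_leftBranchInv : LeftInvOn S.leftBranchInv S.f (Icc 0 S.a) :=
  fun x hx => (S.hf_left x hx).symm

theorem leftInvOn_rightBranchInv : LeftInvOn S.rightBranchInv S.f (Ioc S.a 1) :=
  fun x hx => by rw [rightBranchInv, ← S.hf_right x hx, sub_sub_cancel]

theorem continuousOn_φ_uIcc : ContinuousOn S.φ (uIcc 0 1) := by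
  rw [uIcc_of_le zero_le_one]
  exact S.hφ_cont

theorem continuousOn_leftBranchInv : ContinuousOn S.leftBranchInv (Icc 0 1) := by
  rw [← uIcc_of_le zero_le_one]
  exact intervalIntegral.continuousOn_primitive_interval S.continuousOn_φ_uIcc.integrableOn_uIcc

theorem continuousOn_rightBranchInv : ContinuousOn S.rightBranchInv (Icc 0 1) := by
  rw [← uIcc_of_le zero_le_one]
  exact continuousOn_const.sub <| intervalIntegral.continuousOn_primitive_interval_left
    (continuousOn_const.sub S.continuousOn_φ_uIcc).integrableOn_uIcc

theorem leftBranchInv_zero : S.leftBranchInv 0 = 0 :=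
  intervalIntegral.integral_same

theorem leftBranchInv_one : S.leftBranchInv 1 = S.a :=
  S.ha_def.symm

theorem rightBranchInv_zero : S.rightBranchInv 0 = S.a := by
  rw [rightBranchInv, intervalIntegral.integral_sub intervalIntegrable_const
    S.continuousOn_φ_uIcc.intervalIntegrable, ← S.ha_def]
  simp

theorem rightBranchInv_one : S.rightBranchInv 1 = 1 := by
  simp [rightBranchInv]

end GBTSetup

theorem stmt4 (S : GBTSetup) :
    ∃ x₀ y₀ : ℝ, 0 < x₀ ∧ x₀ < S.a ∧ S.a < y₀ ∧ y₀ < 1 ∧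
      S.f x₀ = y₀ ∧ S.f y₀ = x₀ := by
  have hL := S.leftInvOn_leftBranchInv
  have hR := S.leftInvOn_rightBranchInv
  exact exists_two_cycle_of_continuous_rightInvOn S.ha_mem.1 S.ha_mem.2
    S.continuousOn_leftBranchInv (hL.mapsTo (S.hf_onto_left ▸ surjOn_image _ _))
    (S.hf_onto_left ▸ hL.rightInvOn_image) S.leftBranchInv_zero S.leftBranchInv_one
    S.continuousOn_rightBranchInv (hR.mapsTo (S.hf_onto_right ▸ surjOn_image _ _))
    (S.hf_onto_right ▸ hR.rightInvOn_image) S.rightBranchInv_zero S.rightBranchInv_one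
end

section
/- Fix σ ∈ (0,1) and δ > 0. Let k₁ be the minimal integer such that σ·sup_{x ∈ [0,x_{k₁}] ∪ [y_{k₁},1]} f′(x) < 1 (k₁ is well defined since f′ is increasing on (0,a), decreasing on (a,1), and f′(x_k) → 1 and f′(y_k) → 1 as k → ∞). Then for every k ≥ k₁ and every x ∈ J_k ∪ J′_k, the first (σ,δ)-hyperbolic time satisfies h_{σ,δ}(x) > k − k₁. -/
open MeasureTheory Set Filter Topology
open scoped Classical ENNReal

/-!
Only the condition `l = 1` in the definition of a hyperbolic time is needed: an `n`-hyperbolic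
time forces `|f'(f^{n-1} z)|⁻¹ ≤ σ`. On the left branch `f` inverts `u ↦ ∫₀ᵘ φ`, so
`f' = 1 / φ ∘ f > 0` there (and `f' = 1 / (1 - φ ∘ f)` on the right branch). A point `z ∈ J_k` is
carried by `f` through `J_{k-1}, J_{k-2}, …`, so for `j < k - k₁` the point `f^j z` lies in
`J_{k-j} ⊆ [0, x_{k₁}]`, where `σ f' < 1` by the choice of `k₁`, i.e. `|f'|⁻¹ > σ`.
Hence no `n ≤ k - k₁` is a hyperbolic time; the same holds on `J'_k`.
-/

theorem mapsTo_iterate_of_forall_mapsTo_succ {α : Type*} {f : α → α} {J : ℕ → Set α}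
    (h : ∀ m, MapsTo f (J (m + 1)) (J m)) {j k : ℕ} (hjk : j ≤ k) :
    MapsTo f^[j] (J k) (J (k - j)) := by
  induction j with
  | zero => exact mapsTo_id _
  | succ j ih =>
    rw [Function.iterate_succ']
    have hk : k - j = k - (j + 1) + 1 := by omega
    exact (h _).comp (hk ▸ ih (by omega))

theorem lt_abs_inv_of_mul_lt_one {σ d : ℝ} (hd : 0 < d) (h : σ * d < 1) : σ < |d|⁻¹ := by
  rwa [abs_of_pos hd, ← one_div, lt_div_iff₀ hd]

theorem StrictMonoOn.hasDerivAt_of_leftInverse {f F : ℝ → ℝ} {s : Set ℝ} {w F' : ℝ}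
    (hf : StrictMonoOn f s) (hs : s ∈ 𝓝 w) (hfs : f '' s ∈ 𝓝 (f w))
    (hF : HasDerivAt F F' (f w)) (hF' : F' ≠ 0) (hinv : ∀ v ∈ s, F (f v) = v) :
    HasDerivAt f F'⁻¹ w :=
  HasDerivAt.of_local_left_inverse (hf.continuousAt_of_image_mem_nhds hs hfs) hF hF'
    (eventually_of_mem hs hinv)

theorem hasDerivAt_integral_of_continuousOn {g : ℝ → ℝ} {p q c u : ℝ}
    (hg : ContinuousOn g (Icc p q)) (hc : c ∈ Icc p q) (hu : u ∈ Ioo p q) :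
    HasDerivAt (fun v => ∫ t in c..v, g t) (g u) u :=
  intervalIntegral.integral_hasDerivAt_right
    ((hg.mono (uIcc_subset_Icc hc (Ioo_subset_Icc_self hu))).intervalIntegrable)
    ((hg.mono Ioo_subset_Icc_self).stronglyMeasurableAtFilter isOpen_Ioo u hu)
    (hg.continuousAt (Icc_mem_nhds hu.1 hu.2))

theorem IsHypTime.abs_deriv_inv_le {f : ℝ → ℝ} {S : Set ℝ} {b σ δ x : ℝ} {n : ℕ}
    (h : IsHypTime f S b σ δ x n) : |deriv f (f^[n - 1] x)|⁻¹ ≤ σ := by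
  have hprod := (h.2 1 le_rfl h.1).1
  rwa [Nat.Ico_pred_singleton h.1, Finset.prod_singleton, pow_one] at hprod

theorem lt_firstHypTime_of_forall_lt_abs_deriv_inv {f : ℝ → ℝ} {S : Set ℝ} {b σ δ x : ℝ}
    {N : ℕ} (h : ∀ j < N, σ < |deriv f (f^[j] x)|⁻¹) :
    (N : ℕ∞) < firstHypTime f S b σ δ x := by
  refine (Nat.cast_lt.2 N.lt_succ_self).trans_le (le_sInf ?_)
  rintro _ ⟨n, hn, rfl⟩
  have hNn : N + 1 ≤ n := by
    by_contra! hnN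
    have := hn.1
    exact (h (n - 1) (by omega)).not_ge hn.abs_deriv_inv_le
  exact Nat.cast_le.2 hNn

namespace GBTSetup

variable (S : GBTSetup)

theorem intervalIntegrable_φ {u v : ℝ} (hu : u ∈ Icc (0 : ℝ) 1) (hv : v ∈ Icc (0 : ℝ) 1) :
    IntervalIntegrable S.φ volume u v :=
  (S.hφ_cont.mono (uIcc_subset_Icc hu hv)).intervalIntegrable

theorem integral_φ_le {u : ℝ} (hu : u ∈ Icc (0 : ℝ) 1) : ∫ t in (0 : ℝ)..u, S.φ t ≤ u := by
  calc ∫ t in (0 : ℝ)..u, S.φ t ≤ ∫ _ in (0 : ℝ)..u, (1 : ℝ) :=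
        intervalIntegral.integral_mono_on hu.1 (S.intervalIntegrable_φ ⟨le_rfl, zero_le_one⟩ hu)
          intervalIntegrable_const fun t ht => (S.hφ_mem t ⟨ht.1, ht.2.trans hu.2⟩).2
    _ = u := by simp

theorem integral_one_sub_φ_le {u : ℝ} (hu : u ∈ Icc (0 : ℝ) 1) :
    ∫ t in u..1, (1 - S.φ t) ≤ 1 - u := by
  calc ∫ t in u..1, (1 - S.φ t) ≤ ∫ _ in u..1, (1 : ℝ) :=
        intervalIntegral.integral_mono_on hu.2
          ((continuousOn_const.sub S.hφ_cont).mono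
            (uIcc_subset_Icc hu ⟨zero_le_one, le_rfl⟩)).intervalIntegrable
          intervalIntegrable_const fun t ht => by
            linarith [(S.hφ_mem t ⟨hu.1.trans ht.1, ht.2⟩).1]
    _ = 1 - u := by simp

theorem a_eq_integral_add_integral {u : ℝ} (hu : u ∈ Icc (0 : ℝ) 1) :
    S.a = (∫ t in (0 : ℝ)..u, S.φ t) + ∫ t in u..1, S.φ t := by
  rw [S.ha_def, intervalIntegral.integral_add_adjacent_intervals
    (S.intervalIntegrable_φ ⟨le_rfl, zero_le_one⟩ hu)
    (S.intervalIntegrable_φ hu ⟨zero_le_one, le_rfl⟩)]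

theorem le_f {t : ℝ} (ht : t ∈ Icc 0 S.a) : t ≤ S.f t := by
  have hft : S.f t ∈ Icc (0 : ℝ) 1 := S.hf_onto_left ▸ mem_image_of_mem S.f ht
  exact (S.hf_left t ht).trans_le (S.integral_φ_le hft)

theorem f_le {t : ℝ} (ht : t ∈ Ioc S.a 1) : S.f t ≤ t := by
  have hft : S.f t ∈ Icc (0 : ℝ) 1 :=
    Ioc_subset_Icc_self (S.hf_onto_right ▸ mem_image_of_mem S.f ht)
  linarith [S.hf_right t ht, S.integral_one_sub_φ_le hft]

-- `a = ∫₀¹ φ`, so `φ` cannot vanish before `a`, nor equal `1` after `a`.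
theorem φ_pos {u : ℝ} (hu : u ∈ Ico 0 S.a) : 0 < S.φ u := by
  by_contra! hφu
  have hu1 : u ∈ Icc (0 : ℝ) 1 := ⟨hu.1, (hu.2.trans S.ha_mem.2).le⟩
  have htail : ∫ t in u..1, S.φ t ≤ 0 := by
    calc ∫ t in u..1, S.φ t ≤ ∫ _ in u..1, (0 : ℝ) :=
          intervalIntegral.integral_mono_on hu1.2 (S.intervalIntegrable_φ hu1 ⟨zero_le_one, le_rfl⟩)
            intervalIntegrable_const fun t ht =>
              (S.hφ_anti hu1 ⟨hu1.1.trans ht.1, ht.2⟩ ht.1).trans hφu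
      _ = 0 := by simp
  linarith [S.a_eq_integral_add_integral hu1, S.integral_φ_le hu1, hu.2]

theorem φ_lt_one {u : ℝ} (hu : u ∈ Ioc S.a 1) : S.φ u < 1 := by
  by_contra! hφu
  have hu1 : u ∈ Icc (0 : ℝ) 1 := ⟨(S.ha_mem.1.trans hu.1).le, hu.2⟩
  have hhead : u ≤ ∫ t in (0 : ℝ)..u, S.φ t := by
    calc u = ∫ _ in (0 : ℝ)..u, (1 : ℝ) := by simp
      _ ≤ ∫ t in (0 : ℝ)..u, S.φ t :=
        intervalIntegral.integral_mono_on hu1.1 intervalIntegrable_const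
          (S.intervalIntegrable_φ ⟨le_rfl, zero_le_one⟩ hu1) fun t ht =>
            hφu.trans (S.hφ_anti ⟨ht.1, ht.2.trans hu1.2⟩ hu1 ht.2)
  have htail : 0 ≤ ∫ t in u..1, S.φ t :=
    intervalIntegral.integral_nonneg hu1.2 fun t ht => (S.hφ_mem t ⟨hu1.1.trans ht.1, ht.2⟩).1
  linarith [S.a_eq_integral_add_integral hu1, hu.1]

theorem hasDerivAt_f_of_lt_a {w : ℝ} (hw : w ∈ Ioo 0 S.a) (hfw : S.f w < S.a) :
    HasDerivAt S.f (S.φ (S.f w))⁻¹ w := by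
  have hfw0 : 0 < S.f w := hw.1.trans_le (S.le_f ⟨hw.1.le, hw.2.le⟩)
  have hfw1 : S.f w ∈ Ioo (0 : ℝ) 1 := ⟨hfw0, hfw.trans S.ha_mem.2⟩
  refine S.hf_mono_left.hasDerivAt_of_leftInverse (Icc_mem_nhds hw.1 hw.2)
    (S.hf_onto_left ▸ Icc_mem_nhds hfw1.1 hfw1.2)
    (hasDerivAt_integral_of_continuousOn S.hφ_cont ⟨le_rfl, zero_le_one⟩ hfw1)
    (S.φ_pos ⟨hfw0.le, hfw⟩).ne' fun v hv => (S.hf_left v hv).symm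

theorem hasDerivAt_f_of_a_lt {w : ℝ} (hw : w ∈ Ioo S.a 1) (hfw : S.a < S.f w) :
    HasDerivAt S.f (1 - S.φ (S.f w))⁻¹ w := by
  have hfw1 : S.f w ∈ Ioo (0 : ℝ) 1 :=
    ⟨S.ha_mem.1.trans hfw, (S.f_le ⟨hw.1, hw.2.le⟩).trans_lt hw.2⟩
  have hF := (hasDerivAt_integral_of_continuousOn (g := fun t => 1 - S.φ t)
    (continuousOn_const.sub S.hφ_cont) ⟨zero_le_one, le_rfl⟩ hfw1).const_add 1
  refine S.hf_mono_right.hasDerivAt_of_leftInverse (Ioc_mem_nhds hw.1 hw.2)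
    (S.hf_onto_right ▸ Ioc_mem_nhds hfw1.1 hfw1.2) hF
    (sub_pos.2 (S.φ_lt_one ⟨hfw, hfw1.2.le⟩)).ne' fun v hv => ?_
  linarith [S.hf_right v hv, intervalIntegral.integral_symm (μ := volume)
    (f := fun t => 1 - S.φ t) (S.f v) 1]

theorem deriv_f_pos_of_lt_a {w : ℝ} (hw : w ∈ Ioo 0 S.a) (hfw : S.f w < S.a) :
    0 < deriv S.f w := by
  rw [(S.hasDerivAt_f_of_lt_a hw hfw).deriv]
  exact inv_pos.2 (S.φ_pos ⟨(hw.1.trans_le (S.le_f ⟨hw.1.le, hw.2.le⟩)).le, hfw⟩)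

theorem deriv_f_pos_of_a_lt {w : ℝ} (hw : w ∈ Ioo S.a 1) (hfw : S.a < S.f w) :
    0 < deriv S.f w := by
  rw [(S.hasDerivAt_f_of_a_lt hw hfw).deriv]
  exact inv_pos.2 (sub_pos.2 (S.φ_lt_one ⟨hfw, (S.f_le ⟨hw.1, hw.2.le⟩).trans hw.2.le⟩))

section BackwardOrbits

variable {S} {x y : ℕ → ℝ}

theorem antitone_of_forall_f_succ (hx : ∀ n, x (n + 1) ∈ Ioo 0 S.a ∧ S.f (x (n + 1)) = x n) :
    Antitone x :=
  antitone_nat_of_succ_le fun n => (hx n).2 ▸ S.le_f ⟨(hx n).1.1.le, (hx n).1.2.le⟩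

theorem monotone_of_forall_f_succ (hy : ∀ n, y (n + 1) ∈ Ioo S.a 1 ∧ S.f (y (n + 1)) = y n) :
    Monotone y :=
  monotone_nat_of_le_succ fun n => (hy n).2 ▸ S.f_le ⟨(hy n).1.1, (hy n).1.2.le⟩

theorem mapsTo_f_Ioo_of_lt_a (hx : ∀ n, x (n + 1) ∈ Ioo 0 S.a ∧ S.f (x (n + 1)) = x n)
    (m : ℕ) : MapsTo S.f (Ioo (x (m + 2)) (x (m + 1))) (Ioo (x (m + 1)) (x m)) := by
  have hmono := S.hf_mono_left.mono
    (Icc_subset_Icc (hx (m + 1)).1.1.le (hx m).1.2.le)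
  have hmaps := hmono.mapsTo_Ioo
  rwa [(hx m).2, (hx (m + 1)).2] at hmaps

theorem mapsTo_f_Ioo_of_a_lt (hy : ∀ n, y (n + 1) ∈ Ioo S.a 1 ∧ S.f (y (n + 1)) = y n)
    (m : ℕ) : MapsTo S.f (Ioo (y (m + 1)) (y (m + 2))) (Ioo (y m) (y (m + 1))) := by
  have hmono := S.hf_mono_right.mono fun t (ht : t ∈ Icc (y (m + 1)) (y (m + 2))) =>
    ⟨(hy m).1.1.trans_le ht.1, ht.2.trans (hy (m + 1)).1.2.le⟩
  have hmaps := hmono.mapsTo_Ioo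
  rwa [(hy m).2, (hy (m + 1)).2] at hmaps

theorem lt_abs_deriv_inv_of_lt_a (hx : ∀ n, x (n + 1) ∈ Ioo 0 S.a ∧ S.f (x (n + 1)) = x n)
    (hx0 : x 0 < S.a) {σ : ℝ} {k₁ m : ℕ} (hk₁ : ∀ z ∈ Icc 0 (x k₁), σ * deriv S.f z < 1)
    (hm : k₁ ≤ m + 1) {w : ℝ} (hw : w ∈ Ioo (x (m + 2)) (x (m + 1))) :
    σ < |deriv S.f w|⁻¹ := by
  have hx_anti := antitone_of_forall_f_succ hx
  have hwa : w ∈ Ioo 0 S.a := ⟨(hx (m + 1)).1.1.trans hw.1, hw.2.trans (hx m).1.2⟩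
  have hfw : S.f w < S.a :=
    (mapsTo_f_Ioo_of_lt_a hx m hw).2.trans_le ((hx_anti m.zero_le).trans hx0.le)
  exact lt_abs_inv_of_mul_lt_one (S.deriv_f_pos_of_lt_a hwa hfw)
    (hk₁ w ⟨hwa.1.le, hw.2.le.trans (hx_anti hm)⟩)

theorem lt_abs_deriv_inv_of_a_lt (hy : ∀ n, y (n + 1) ∈ Ioo S.a 1 ∧ S.f (y (n + 1)) = y n)
    (hy0 : S.a < y 0) {σ : ℝ} {k₁ m : ℕ} (hk₁ : ∀ z ∈ Icc (y k₁) 1, σ * deriv S.f z < 1)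
    (hm : k₁ ≤ m + 1) {w : ℝ} (hw : w ∈ Ioo (y (m + 1)) (y (m + 2))) :
    σ < |deriv S.f w|⁻¹ := by
  have hy_mono := monotone_of_forall_f_succ hy
  have hwa : w ∈ Ioo S.a 1 := ⟨(hy m).1.1.trans hw.1, hw.2.trans (hy (m + 1)).1.2⟩
  have hfw : S.a < S.f w :=
    (hy0.trans_le (hy_mono m.zero_le)).trans (mapsTo_f_Ioo_of_a_lt hy m hw).1
  exact lt_abs_inv_of_mul_lt_one (S.deriv_f_pos_of_a_lt hwa hfw)
    (hk₁ w ⟨(hy_mono hm).trans hw.1.le, hwa.2.le⟩)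

end BackwardOrbits

end GBTSetup

theorem stmt12_general (S : GBTSetup)
    (x y : ℕ → ℝ)
    (hx0a : x 0 < S.a) (hay0 : S.a < y 0)
    (hx : ∀ n : ℕ, x (n+1) ∈ Ioo 0 S.a ∧ S.f (x (n+1)) = x n)
    (hy : ∀ n : ℕ, y (n+1) ∈ Ioo S.a 1 ∧ S.f (y (n+1)) = y n)
    (b σ δ : ℝ)
    (k₁ : ℕ)
    (hk₁ : ∀ z ∈ Icc (0:ℝ) (x k₁) ∪ Icc (y k₁) 1, σ * deriv S.f z < 1) :
    ∀ k : ℕ, k₁ ≤ k → ∀ z ∈ Ioo (x (k+1)) (x k) ∪ Ioo (y k) (y (k+1)),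
      ((k - k₁ : ℕ) : ℕ∞) < firstHypTime S.f {0, S.a, 1} b σ δ z := by
  intro k hk z hz
  refine lt_firstHypTime_of_forall_lt_abs_deriv_inv fun j hj => ?_
  obtain ⟨m, hm⟩ : ∃ m, k - j = m + 1 := ⟨k - j - 1, by omega⟩
  rcases hz with hz | hz
  · have hw := mapsTo_iterate_of_forall_mapsTo_succ (J := fun i => Ioo (x (i + 1)) (x i))
      (GBTSetup.mapsTo_f_Ioo_of_lt_a hx) (show j ≤ k by omega) hz
    rw [hm] at hw
    exact GBTSetup.lt_abs_deriv_inv_of_lt_a hx hx0a (fun w h => hk₁ w (Or.inl h)) (by omega) hw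
  · have hw := mapsTo_iterate_of_forall_mapsTo_succ (J := fun i => Ioo (y i) (y (i + 1)))
      (GBTSetup.mapsTo_f_Ioo_of_a_lt hy) (show j ≤ k by omega) hz
    rw [hm] at hw
    exact GBTSetup.lt_abs_deriv_inv_of_a_lt hy hay0 (fun w h => hk₁ w (Or.inr h)) (by omega) hw

theorem stmt12 (S : GBTSetup)
    (x x' y y' : ℕ → ℝ)
    (hx0 : 0 < x 0) (hx0a : x 0 < S.a) (hay0 : S.a < y 0) (hy01 : y 0 < 1)
    (hper1 : S.f (x 0) = y 0) (hper2 : S.f (y 0) = x 0)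
    (hx : ∀ n : ℕ, x (n+1) ∈ Ioo 0 S.a ∧ S.f (x (n+1)) = x n)
    (hx' : ∀ n : ℕ, x' (n+1) ∈ Ioo S.a 1 ∧ S.f (x' (n+1)) = x n)
    (hy : ∀ n : ℕ, y (n+1) ∈ Ioo S.a 1 ∧ S.f (y (n+1)) = y n)
    (hy' : ∀ n : ℕ, y' (n+1) ∈ Ioo 0 S.a ∧ S.f (y' (n+1)) = y n)
    (b σ δ : ℝ) (hb : b ∈ Ioo (0:ℝ) (1/4)) (hσ : σ ∈ Ioo (0:ℝ) 1) (hδ : 0 < δ)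
    (k₁ : ℕ)
    (hk₁ : ∀ z ∈ Icc (0:ℝ) (x k₁) ∪ Icc (y k₁) 1, σ * deriv S.f z < 1) :
    ∀ k : ℕ, k₁ ≤ k → ∀ z ∈ Ioo (x (k+1)) (x k) ∪ Ioo (y k) (y (k+1)),
      ((k - k₁ : ℕ) : ℕ∞) < firstHypTime S.f {0, S.a, 1} b σ δ z :=
  stmt12_general S x y hx0a hay0 hx hy b σ δ k₁ hk₁
end
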